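/- arXiv:2302.02152 — 4 statements merged into one kernel-verified Lean document; each statement's English description precedes it below -/
import Mathlib

section
/- A digraph D of order n with γ_OL(D) = n contains no double-forced vertex; in particular no vertex is both domination-forced and location-forced, and no vertex is location-forced by two different (unordered) pairs of vertices. -/
open scoped symmDiff

/-- The open in-neighbourhood of `v` in the digraph `D` (loops allowed). -/
def Nin {V : Type*} (D : V → V → Prop) (v : V) : Set V := {u | D u v}

/-- A digraph is locatable if every vertex has positive in-degree and
open in-neighbourhoods are pairwise distinct. -/
def Locatable {V : Type*} (D : V → V → Prop) : Prop :=
  (∀ v, (Nin D v).Nonempty) ∧ ∀ x y, Nin D x = Nin D y → x = y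

/-- `S` is an open neighbourhood locating-dominating set of `D`. -/
def IsOLD {V : Type*} (D : V → V → Prop) (S : Set V) : Prop :=
  (∀ v, ∃ u ∈ S, D u v) ∧ ∀ x y, x ≠ y → ∃ s ∈ S, s ∈ Nin D x ∆ Nin D y

/-- The OLD number `γ_OL(D)`: minimum size of an OLD set. -/
noncomputable def oldNum {V : Type*} (D : V → V → Prop) : ℕ :=
  sInf {k | ∃ S : Set V, IsOLD D S ∧ S.ncard = k}

/-- `v` is domination-forced: it is the unique in-neighbour of some vertex. -/
def DomForced {V : Type*} (D : V → V → Prop) (v : V) : Prop := ∃ w, Nin D w = {v}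

/-- `v` is location-forced: some pair of distinct vertices has
in-neighbourhood symmetric difference `{v}`. -/
def LocForced {V : Type*} (D : V → V → Prop) (v : V) : Prop :=
  ∃ x y, x ≠ y ∧ Nin D x ∆ Nin D y = {v}

/-- The arc `xy` is a forcing arc. -/
def ForcingArc {V : Type*} (D : V → V → Prop) (x y : V) : Prop :=
  Nin D y = {x} ∨ ∃ z, Nin D y ∆ Nin D z = {x} ∧ x ∈ Nin D y

/-- The underlying simple undirected graph of a digraph. -/
def underlying {V : Type*} (D : V → V → Prop) : SimpleGraph V where
  Adj x y := x ≠ y ∧ (D x y ∨ D y x)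
  symm := ⟨by intro x y h; exact ⟨h.1.symm, h.2.symm⟩⟩
  loopless := ⟨by intro x h; exact h.1 rfl⟩


/-!
If some vertex `u` were neither domination- nor location-forced, `V \ {u}` would already be
an OLD set. So when `γ_OL(D) = n`, every vertex `u` is the symmetric difference of two of the
`n + 1` sets `∅, N⁻(w)`; view such a pair of sets as an edge labelled `u`. One edge per vertex
together with any further edge labelled `v` gives `n + 1` edges on `n + 1` nodes, hence a cycle
over `𝔽₂`. Summing the indicator functions of the labels around the cycle gives `0`, and every
label other than `v` occurs only once, so the cycle consists of the two `v`-edges: they join the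
same two nodes. Each kind of double forcing would produce two different `v`-edges.
-/

namespace Set

lemma Nonempty.exists_mem_compl_singleton {α : Type*} {s : Set α} {a : α} (hs : s.Nonempty)
    (h : s ≠ {a}) : ∃ x ∈ ({a}ᶜ : Set α), x ∈ s := by
  by_contra! H
  refine h (eq_singleton_iff_nonempty_unique_mem.mpr ⟨hs, fun x hx => ?_⟩)
  exact by_contra fun hxa => H x hxa hx

lemma indicator_symmDiff_one_zmodTwo {α : Type*} (s t : Set α) :
    (s ∆ t).indicator (1 : α → ZMod 2) = s.indicator 1 + t.indicator 1 := by
  funext x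
  by_cases hs : x ∈ s <;> by_cases ht : x ∈ t <;>
    simp [mem_symmDiff, hs, ht, CharTwo.add_self_eq_zero]

end Set

section PairVec

variable {N : Type*} [DecidableEq N]

/-- The incidence vector over `𝔽₂` of the edge `pq`. -/
def pairVec (p q : N) : N → ZMod 2 := Pi.single p 1 + Pi.single q 1

lemma pairVec_apply_eq_one_iff {p q : N} (hpq : p ≠ q) (x : N) :
    pairVec p q x = 1 ↔ x ∈ ({p, q} : Set N) := by
  by_cases hp : x = p <;> by_cases hq : x = q <;> simp_all [pairVec]

lemma pair_eq_of_pairVec_eq {p q p' q' : N} (hpq : p ≠ q) (hpq' : p' ≠ q')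
    (h : pairVec p q = pairVec p' q') : ({p, q} : Set N) = {p', q'} := by
  ext x
  rw [← pairVec_apply_eq_one_iff hpq, ← pairVec_apply_eq_one_iff hpq', h]

lemma sum_pairVec [Fintype N] (p q : N) : ∑ x, pairVec p q x = 0 := by
  simp [pairVec, Finset.sum_add_distrib, CharTwo.add_self_eq_zero]

/-- A multigraph with at least as many edges as nodes contains a cycle. -/
lemma not_linearIndependent_pairVec [Fintype N] [Nonempty N] {ι : Type*} [Fintype ι]
    (p q : ι → N) (hcard : Fintype.card N ≤ Fintype.card ι) :
    ¬ LinearIndependent (ZMod 2) (fun i => pairVec (p i) (q i)) := by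
  intro hli
  have hcard_eq : Fintype.card ι = Module.finrank (ZMod 2) (N → ZMod 2) := by
    have := hli.fintype_card_le_finrank
    rw [Module.finrank_fintype_fun_eq_card] at this ⊢
    omega
  let σ := Fintype.linearCombination (ZMod 2) fun _ : N => (1 : ZMod 2)
  have hspan : Submodule.span (ZMod 2) (Set.range fun i => pairVec (p i) (q i)) ≤
      LinearMap.ker σ := by
    rw [Submodule.span_le]
    rintro _ ⟨i, rfl⟩
    simpa [σ, Fintype.linearCombination_apply] using sum_pairVec (p i) (q i)
  rw [hli.span_eq_top_of_card_eq_finrank' hcard_eq] at hspan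
  obtain ⟨x⟩ := ‹Nonempty N›
  simpa [σ] using hspan (Submodule.mem_top (x := Pi.single x 1))

end PairVec

section SetCombination

variable {N V : Type*} [Fintype N] [DecidableEq N] (g : N → Set V)

noncomputable def setCombination : (N → ZMod 2) →ₗ[ZMod 2] (V → ZMod 2) :=
  Fintype.linearCombination (ZMod 2) fun o => (g o).indicator 1

lemma setCombination_pairVec (p q : N) :
    setCombination g (pairVec p q) = (g p ∆ g q).indicator 1 := by
  simp [setCombination, pairVec, Set.indicator_symmDiff_one_zmodTwo]

variable [Fintype V] [DecidableEq V]

lemma pair_eq_of_symmDiff_eq_singleton (hcard : Fintype.card N ≤ Fintype.card V + 1)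
    {p q : V → N} (hpq : ∀ u, g (p u) ∆ g (q u) = {u}) {a b : N} {v : V}
    (hab : g a ∆ g b = {v}) : ({a, b} : Set N) = {p v, q v} := by
  have hne {x y : N} {u : V} (h : g x ∆ g y = {u}) : x ≠ y := by
    rintro rfl
    simp at h
  let p' : Option V → N := fun i => i.elim a p
  let q' : Option V → N := fun i => i.elim b q
  have hlabel : ∀ i, g (p' i) ∆ g (q' i) = {i.getD v} := by
    rintro (_ | u)
    exacts [hab, hpq u]
  have : Nonempty N := ⟨a⟩
  obtain ⟨c, hc, i₀, hi₀⟩ := Fintype.not_linearIndependent_iff.mp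
    (not_linearIndependent_pairVec p' q' (by simpa using hcard))
  have hlabel_sum (u : V) : (if u = v then c none else 0) + c (some u) = 0 := by
    have := congrFun (congrArg (setCombination g) hc) u
    simpa [map_sum, setCombination_pairVec, hlabel, Fintype.sum_option, Pi.single_apply,
      eq_comm] using this
  have hc_some {u : V} (hu : u ≠ v) : c (some u) = 0 := by simpa [hu] using hlabel_sum u
  have hc_none : c none = 1 := by
    refine ((by decide : ∀ x : ZMod 2, x = 0 ∨ x = 1) _).resolve_left fun h0 => hi₀ ?_
    have hv : c (some v) = 0 := by simpa [h0] using hlabel_sum v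
    rcases i₀ with _ | u
    · exact h0
    · by_cases hu : u = v
      · rwa [hu]
      · exact hc_some hu
  have hc_v : c (some v) = 1 := by
    have h := hlabel_sum v
    rw [if_pos rfl, hc_none, CharTwo.add_eq_zero] at h
    exact h.symm
  have hsum : ∑ i, c i • pairVec (p' i) (q' i) = pairVec a b + pairVec (p v) (q v) := by
    rw [Fintype.sum_option, Finset.sum_eq_single v (fun u _ hu => by simp [hc_some hu]) (by simp)]
    simp [hc_none, hc_v, p', q']
  rw [hsum, CharTwo.add_eq_zero] at hc
  exact pair_eq_of_pairVec_eq (hne hab) (hne (hpq v)) hc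

lemma pair_eq_pair_of_symmDiff_eq_singleton (hcard : Fintype.card N ≤ Fintype.card V + 1)
    (hforced : ∀ u, ∃ a b, g a ∆ g b = {u}) {a b a' b' : N} {v : V}
    (h : g a ∆ g b = {v}) (h' : g a' ∆ g b' = {v}) : ({a, b} : Set N) = {a', b'} := by
  choose p q hpq using hforced
  rw [pair_eq_of_symmDiff_eq_singleton g hcard hpq h,
    pair_eq_of_symmDiff_eq_singleton g hcard hpq h']

end SetCombination

section Digraph

variable {V : Type*} {D : V → V → Prop}

lemma isOLD_compl_singleton (hloc : Locatable D) {u : V} (hnotDom : ¬ DomForced D u)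
    (hnotLoc : ¬ LocForced D u) : IsOLD D {u}ᶜ := by
  refine ⟨fun w => ?_, fun x y hxy => ?_⟩
  · exact (hloc.1 w).exists_mem_compl_singleton fun h => hnotDom ⟨w, h⟩
  · have hsd : (Nin D x ∆ Nin D y).Nonempty :=
      Set.symmDiff_nonempty.mpr fun h => hxy (hloc.2 x y h)
    exact hsd.exists_mem_compl_singleton fun h => hnotLoc ⟨x, y, hxy, h⟩

lemma forced_of_oldNum_eq_card [Fintype V] (hloc : Locatable D)
    (hext : oldNum D = Fintype.card V) (u : V) : DomForced D u ∨ LocForced D u := by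
  by_contra! h
  have hle : oldNum D ≤ Fintype.card V - 1 := Nat.sInf_le
    ⟨{u}ᶜ, isOLD_compl_singleton hloc h.1 h.2, by
      rw [Set.ncard_compl, Set.ncard_singleton, Nat.card_eq_fintype_card]⟩
  have hpos : 0 < Fintype.card V := Fintype.card_pos_iff.mpr ⟨u⟩
  omega

/-- The extra node `none ↦ ∅` lets `N⁻(w) = {u}` read as the symmetric difference
`∅ ∆ N⁻(w) = {u}`. -/
def ninWithEmpty (D : V → V → Prop) (o : Option V) : Set V := o.elim ∅ (Nin D)

lemma ninWithEmpty_none_symmDiff_some (w : V) :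
    ninWithEmpty D none ∆ ninWithEmpty D (some w) = Nin D w :=
  bot_symmDiff _

lemma exists_symmDiff_ninWithEmpty_eq_singleton {u : V} :
    DomForced D u ∨ LocForced D u → ∃ a b, ninWithEmpty D a ∆ ninWithEmpty D b = {u} := by
  rintro (⟨w, hw⟩ | ⟨x, y, -, hxy⟩)
  · exact ⟨none, some w, (ninWithEmpty_none_symmDiff_some w).trans hw⟩
  · exact ⟨some x, some y, hxy⟩

end Digraph

theorem stmt_4 {V : Type*} [Fintype V] (D : V → V → Prop) (hloc : Locatable D)
    (hext : oldNum D = Fintype.card V) (v : V) :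
    ¬ ((DomForced D v ∧ LocForced D v) ∨
      ∃ x y x' y', x ≠ y ∧ x' ≠ y' ∧
        Nin D x ∆ Nin D y = {v} ∧ Nin D x' ∆ Nin D y' = {v} ∧
        ({x, y} : Set V) ≠ {x', y'}) := by
  classical
  have hpair (a b a' b' : Option V) (h : ninWithEmpty D a ∆ ninWithEmpty D b = {v})
      (h' : ninWithEmpty D a' ∆ ninWithEmpty D b' = {v}) : ({a, b} : Set _) = {a', b'} :=
    pair_eq_pair_of_symmDiff_eq_singleton _ (by simp)
      (fun u => exists_symmDiff_ninWithEmpty_eq_singleton (forced_of_oldNum_eq_card hloc hext u))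
      h h'
  rintro (⟨⟨w, hw⟩, x, y, -, hxy⟩ | ⟨x, y, x', y', -, -, h, h', hne⟩)
  · simpa [Set.pair_eq_pair_iff] using
      hpair none (some w) (some x) (some y) ((ninWithEmpty_none_symmDiff_some w).trans hw) hxy
  · refine hne ?_
    simpa [Set.pair_eq_pair_iff] using hpair (some x) (some y) (some x') (some y') h h'
end

section
/- Let D be a digraph of order n and let D' be the spanning subgraph of D consisting exactly of the forcing arcs of D. Then γ_OL(D) = n if and only if D' is a disjoint union of directed cycles spanning all of V(D) (loops count as cycles of length 1). -/
/-!
Consider the `n + 1` points `0` and `1_{N⁻(v)}` (`v ∈ V`) of `(ZMod 2)^V`. The arc `xy` is forcing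
exactly when `x ∈ N⁻(y)` and `N⁻(y) \ {x}` is `∅` or some `N⁻(z)`, so a forcing arc out of `x`
writes the unit vector `e_x` as a difference of two of these points. If every vertex is the tail
of a forcing arc, these differences span `(ZMod 2)^V`, so the points are affinely independent (in
particular `D` is locatable): a sum of an even number of them vanishes only if every point
occurs an even number of times. Comparing two expressions of `e_x` shows that the forcing arc out
of `x` is unique, and summing `e_x` over `x ∈ N⁻(y)` shows that `y` has a forcing in-arc. So
"head of the forcing arc" is a surjective, hence bijective, map `V → V`.

On the other side, `γ_OL(D) = n` iff every vertex is the tail of a forcing arc: the tail of a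
forcing arc lies in every OLD set, and deleting from `V` a vertex that is the tail of no forcing
arc leaves an OLD set.
-/

open scoped symmDiff

theorem AffineIndependent.natCast_count_eq_zero {k ι M : Type*} [Ring k] [AddCommGroup M]
    [Module k M] [DecidableEq ι] {p : ι → M} (hp : AffineIndependent k p) {t : Multiset ι}
    (hcard : (Multiset.card t : k) = 0) (hsum : (t.map p).sum = 0) (i : ι) :
    (t.count i : k) = 0 := by
  by_cases hi : i ∈ t
  · refine hp.eq_zero_of_sum_eq_zero (s := t.toFinset) (w := fun j => (t.count j : k)) ?_ ?_ i
      (Multiset.mem_toFinset.2 hi)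
    · rw [← Nat.cast_sum, Multiset.toFinset_sum_count_eq, hcard]
    · simp_rw [Nat.cast_smul_eq_nsmul]
      rw [← Finset.sum_multiset_map_count, hsum]
  · simp [Multiset.count_eq_zero.2 hi]

theorem AffineIndependent.mem_of_add_sum_eq_zero {ι M : Type*} [AddCommGroup M]
    [Module (ZMod 2) M] [DecidableEq ι] {p : ι → M} (hp : AffineIndependent (ZMod 2) p) {i : ι}
    {s : Multiset ι} (hs : Odd (Multiset.card s)) (hsum : p i + (s.map p).sum = 0) : i ∈ s := by
  have hcount := hp.natCast_count_eq_zero (t := i ::ₘ s)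
    (by
      rw [Multiset.card_cons]
      exact (Nat.even_add_one.2 (Nat.not_even_iff_odd.2 hs)).natCast_zmod_two)
    (by simpa using hsum) i
  rw [Multiset.count_cons_self, ZMod.natCast_eq_zero_iff_even, Nat.even_add_one,
    Nat.not_even_iff_odd] at hcount
  exact Multiset.count_pos.1 hcount.pos

theorem Set.symmDiff_ne_singleton_of_mem {α : Type*} {X Y : Set α} {a : α} (hX : a ∈ X)
    (hY : a ∈ Y) : X ∆ Y ≠ {a} := fun h =>
  (Set.mem_symmDiff.1 (h ▸ rfl : a ∈ X ∆ Y)).elim (fun h => h.2 hY) (fun h => h.2 hX)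

section Digraph

variable {V : Type*} {D : V → V → Prop}

theorem forcingArc_iff {a w : V} :
    ForcingArc D a w ↔ a ∈ Nin D w ∧ ∃ j : Option V, Nin D w ∆ j.elim ∅ (Nin D) = {a} := by
  constructor
  · rintro (h | ⟨z, hz, ha⟩)
    · exact ⟨h ▸ rfl, none, by rwa [Option.elim_none, ← Set.bot_eq_empty, symmDiff_bot]⟩
    · exact ⟨ha, some z, hz⟩
  · rintro ⟨ha, (_ | z), hj⟩
    · exact Or.inl (by rwa [Option.elim_none, ← Set.bot_eq_empty, symmDiff_bot] at hj)
    · exact Or.inr ⟨z, hj, ha⟩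

theorem IsOLD.mem_of_forcingArc {S : Set V} (hS : IsOLD D S) {v u : V} (h : ForcingArc D v u) :
    v ∈ S := by
  rcases h with h | ⟨z, hz, hv⟩
  · obtain ⟨t, ht, htu⟩ := hS.1 u
    rwa [show t = v from (h ▸ htu : t ∈ ({v} : Set V))] at ht
  · have huz : u ≠ z := by
      rintro rfl
      exact Set.symmDiff_ne_singleton_of_mem hv hv hz
    obtain ⟨t, ht, htuz⟩ := hS.2 u z huz
    rwa [show t = v from (hz ▸ htuz : t ∈ ({v} : Set V))] at ht

theorem Locatable.isOLD_univ (h : Locatable D) : IsOLD D Set.univ := by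
  refine ⟨fun v => (h.1 v).imp fun u hu => ⟨trivial, hu⟩, fun x y hxy => ?_⟩
  obtain ⟨t, ht⟩ := Set.nonempty_iff_ne_empty.2 fun he => hxy (h.2 x y (Set.symmDiff_eq_empty.1 he))
  exact ⟨t, trivial, ht⟩

theorem IsOLD.compl_singleton (h : IsOLD D Set.univ) {v : V} (hv : ∀ u, ¬ForcingArc D v u) :
    IsOLD D {v}ᶜ := by
  refine ⟨fun w => ?_, fun x y hxy => ?_⟩
  · by_contra! hw
    obtain ⟨u, -, hu : u ∈ Nin D w⟩ := h.1 w
    refine hv w (Or.inl ((Set.nonempty_of_mem hu).subset_singleton_iff.1 fun x hx => ?_))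
    by_contra hxv
    exact hw x hxv hx
  · by_contra! hw
    obtain ⟨t, -, ht⟩ := h.2 x y hxy
    have heq : Nin D x ∆ Nin D y = {v} :=
      (Set.nonempty_of_mem ht).subset_singleton_iff.1 fun s hs => by
        by_contra hsv
        exact hw s hsv hs
    rcases Set.mem_symmDiff.1 (heq ▸ rfl : v ∈ Nin D x ∆ Nin D y) with ⟨hvx, -⟩ | ⟨hvy, -⟩
    · exact hv x (Or.inr ⟨y, heq, hvx⟩)
    · exact hv y (Or.inr ⟨x, symmDiff_comm (Nin D x) (Nin D y) ▸ heq, hvy⟩)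

noncomputable def inNbhdVec (D : V → V → Prop) (j : Option V) : V → ZMod 2 :=
  (j.elim ∅ (Nin D)).indicator 1

@[simp]
theorem inNbhdVec_none : inNbhdVec D none = 0 :=
  Set.indicator_empty _

theorem inNbhdVec_add_of_symmDiff_eq [DecidableEq V] {a w : V} {j : Option V}
    (h : Nin D w ∆ j.elim ∅ (Nin D) = {a}) :
    inNbhdVec D (some w) + inNbhdVec D j = Pi.single a 1 := by
  ext v
  have hv := congrArg (v ∈ ·) h
  simp only [Set.mem_symmDiff, Set.mem_singleton_iff, eq_iff_iff] at hv
  by_cases hw : v ∈ Nin D w <;> by_cases hj : v ∈ j.elim ∅ (Nin D) <;>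
    simp_all [inNbhdVec, ZModModule.add_self]

end Digraph

section Finite

variable {V : Type*} [Fintype V] {D : V → V → Prop}

theorem affineIndependent_inNbhdVec (hforce : ∀ a, ∃ w, ForcingArc D a w) :
    AffineIndependent (ZMod 2) (inNbhdVec D) := by
  classical
  have hspan : ∀ a, Pi.single a 1 ∈ vectorSpan (ZMod 2) (Set.range (inNbhdVec D)) := by
    intro a
    obtain ⟨w, -, j, hj⟩ := (hforce a).imp fun _ => forcingArc_iff.1
    rw [← inNbhdVec_add_of_symmDiff_eq hj, ← ZModModule.sub_eq_add, ← vsub_eq_sub]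
    exact vsub_mem_vectorSpan _ (Set.mem_range_self _) (Set.mem_range_self _)
  have htop : vectorSpan (ZMod 2) (Set.range (inNbhdVec D)) = ⊤ := by
    rw [eq_top_iff, ← (Pi.basisFun (ZMod 2) V).span_eq, Submodule.span_le]
    rintro _ ⟨a, rfl⟩
    simpa using hspan a
  rw [affineIndependent_iff_le_finrank_vectorSpan _ _ (Fintype.card_option (α := V)), htop,
    finrank_top, Module.finrank_fintype_fun_eq_card]

theorem locatable_of_forall_forcingArc (hforce : ∀ a, ∃ w, ForcingArc D a w) : Locatable D := by
  have hinj : Function.Injective fun j : Option V => j.elim ∅ (Nin D) := fun j j' h =>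
    (affineIndependent_inNbhdVec hforce).injective (congrArg (Set.indicator · 1) h)
  refine ⟨fun v => Set.nonempty_iff_ne_empty.2 fun hv => ?_, fun x y h => ?_⟩
  · exact Option.some_ne_none v (@hinj (some v) none hv)
  · exact Option.some_injective _ (@hinj (some x) (some y) h)

theorem ForcingArc.head_unique (hforce : ∀ a, ∃ w, ForcingArc D a w) {a w w' : V}
    (h : ForcingArc D a w) (h' : ForcingArc D a w') : w = w' := by
  classical
  obtain ⟨ha, j, hj⟩ := forcingArc_iff.1 h
  obtain ⟨ha', j', hj'⟩ := forcingArc_iff.1 h'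
  have hsum : inNbhdVec D (some w) + (({j, some w', j'} : Multiset (Option V)).map
      (inNbhdVec D)).sum = 0 := by
    simp only [Multiset.insert_eq_cons, Multiset.map_cons, Multiset.map_singleton,
      Multiset.sum_cons, Multiset.sum_singleton, ← add_assoc, inNbhdVec_add_of_symmDiff_eq hj]
    rw [add_assoc, inNbhdVec_add_of_symmDiff_eq hj', ZModModule.add_self]
  have hmem := (affineIndependent_inNbhdVec hforce).mem_of_add_sum_eq_zero (by norm_num) hsum
  simp only [Multiset.insert_eq_cons, Multiset.mem_cons, Multiset.mem_singleton] at hmem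
  rcases hmem with rfl | h | rfl
  · exact absurd hj (Set.symmDiff_ne_singleton_of_mem ha ha)
  · exact Option.some_injective _ h
  · exact absurd hj' (Set.symmDiff_ne_singleton_of_mem ha' ha)

theorem exists_forcingArc_to (hforce : ∀ a, ∃ w, ForcingArc D a w) (w : V) :
    ∃ a, ForcingArc D a w := by
  classical
  obtain ⟨u, hu⟩ := Classical.axiomOfChoice hforce
  choose hin j hj using fun a => forcingArc_iff.1 (hu a)
  set S := (Nin D w).toFinset
  have hsum : ∑ a ∈ S, (inNbhdVec D (some (u a)) + inNbhdVec D (j a)) = inNbhdVec D (some w) := by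
    simp_rw [inNbhdVec_add_of_symmDiff_eq (hj _)]
    ext v
    simp [S, inNbhdVec, Finset.sum_apply, Pi.single_apply, Set.indicator_apply]
  have hmem := (affineIndependent_inNbhdVec hforce).mem_of_add_sum_eq_zero (i := some w)
    (s := none ::ₘ (S.val.map (some ∘ u) + S.val.map j)) (by simp) (by
      simp only [Multiset.map_cons, Multiset.sum_cons, Multiset.map_add, Multiset.sum_add,
        Multiset.map_map, Function.comp_apply, ← Finset.sum_eq_multiset_sum]
      rw [← Finset.sum_add_distrib, hsum, inNbhdVec_none, zero_add, ZModModule.add_self])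
  rcases Multiset.mem_cons.1 hmem with h | h
  · exact absurd h (Option.some_ne_none w)
  rcases Multiset.mem_add.1 h with h | h
  · obtain ⟨a, -, hua⟩ := Multiset.mem_map.1 h
    exact ⟨a, Option.some_injective _ hua ▸ hu a⟩
  · obtain ⟨a, ha, hja⟩ := Multiset.mem_map.1 h
    have haw : a ∈ Nin D w := Set.mem_toFinset.1 ha
    have := hj a
    rw [hja] at this
    exact (Set.symmDiff_ne_singleton_of_mem (hin a) haw this).elim

theorem existsUnique_forcingArc (hforce : ∀ a, ∃ w, ForcingArc D a w) (v : V) :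
    (∃! u, ForcingArc D v u) ∧ (∃! u, ForcingArc D u v) := by
  obtain ⟨f, hf⟩ := Classical.axiomOfChoice hforce
  have heq {a w : V} (h : ForcingArc D a w) : w = f a := h.head_unique hforce (hf a)
  have hsurj : Function.Surjective f := fun w =>
    (exists_forcingArc_to hforce w).imp fun _ h => (heq h).symm
  obtain ⟨a, ha⟩ := hsurj v
  have hinj : Function.Injective f := Finite.injective_iff_surjective.2 hsurj
  exact ⟨⟨f v, hf v, fun _ => heq⟩, ⟨a, ha ▸ hf a, fun b hb => hinj ((heq hb).symm.trans ha.symm)⟩⟩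

theorem oldNum_eq_card_iff : oldNum D = Fintype.card V ↔ ∀ a, ∃ w, ForcingArc D a w := by
  constructor
  · intro h a
    by_contra! ha
    obtain ⟨S, hS, hcard⟩ := Nat.sInf_mem (s := {k | ∃ S : Set V, IsOLD D S ∧ S.ncard = k}) (by
      by_contra hemp
      rw [Set.not_nonempty_iff_eq_empty] at hemp
      have := Fintype.card_pos_iff.2 ⟨a⟩
      simp only [oldNum, hemp, Nat.sInf_empty] at h
      omega)
    have hcard_univ : (Set.univ : Set V).ncard = oldNum D := by
      rw [Set.ncard_univ, Nat.card_eq_fintype_card, h]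
    have hS_univ : S = Set.univ :=
      Set.eq_of_subset_of_ncard_le (Set.subset_univ S) (hcard_univ.trans hcard.symm).le
    have hle : oldNum D ≤ ({a}ᶜ : Set V).ncard :=
      Nat.sInf_le ⟨_, (hS_univ ▸ hS).compl_singleton ha, rfl⟩
    have hlt : ({a}ᶜ : Set V).ncard < (Set.univ : Set V).ncard :=
      Set.ncard_lt_ncard (Set.singleton_nonempty a).compl_ssubset_univ
    omega
  · intro hforce
    have huniv := (locatable_of_forall_forcingArc hforce).isOLD_univ
    refine le_antisymm (Nat.sInf_le ⟨_, huniv, by rw [Set.ncard_univ, Nat.card_eq_fintype_card]⟩)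
      (le_csInf ⟨_, _, huniv, rfl⟩ ?_)
    rintro _ ⟨S, hS, rfl⟩
    rw [Set.eq_univ_of_forall fun v => hS.mem_of_forcingArc (hforce v).choose_spec,
      Set.ncard_univ, Nat.card_eq_fintype_card]

end Finite

/-- The forcing arcs form a spanning disjoint union of directed cycles
(loops allowed) iff every vertex has exactly one outgoing and exactly one
incoming forcing arc. -/
theorem stmt_5 {V : Type*} [Fintype V] (D : V → V → Prop) :
    oldNum D = Fintype.card V ↔
      ∀ v, (∃! u, ForcingArc D v u) ∧ (∃! u, ForcingArc D u v) := by
  rw [oldNum_eq_card_iff]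
  exact ⟨fun h => existsUnique_forcingArc h, fun h v => (h v).1.exists⟩
end

section
/- If a digraph D of order n contains a source (a vertex of out-degree 0, besides possible loop) or a sink, then γ_OL(D) ≤ n − 1 (assuming D is locatable). -/
/-! A locatable digraph has no source, since every vertex has an in-neighbour. A sink `v`
belongs to no in-neighbourhood, so it neither dominates nor separates anything: removing it
from the OLD set of all vertices leaves an OLD set of size `n - 1`. -/

open scoped symmDiff

section

variable {V : Type*} {D : V → V → Prop}

theorem locatable_iff_isOLD_univ : Locatable D ↔ IsOLD D Set.univ := by
  constructor
  · intro hloc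
    refine ⟨fun v => ?_, fun x y hxy => ?_⟩
    · obtain ⟨u, hu⟩ := hloc.1 v
      exact ⟨u, trivial, hu⟩
    · obtain ⟨s, hs⟩ := Set.symmDiff_nonempty.2 (mt (hloc.2 x y) hxy)
      exact ⟨s, trivial, hs⟩
  · intro hS
    refine ⟨fun v => ?_, fun x y hxy => ?_⟩
    · obtain ⟨u, -, hu⟩ := hS.1 v
      exact ⟨u, hu⟩
    · by_contra hne
      obtain ⟨s, -, hs⟩ := hS.2 x y hne
      simp [hxy] at hs

theorem IsOLD.diff_singleton_of_sink {S : Set V} {v : V} (hS : IsOLD D S)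
    (hv : ∀ u, ¬ D v u) : IsOLD D (S \ {v}) := by
  have not_in : ∀ {s w}, s ∈ Nin D w → s ≠ v := fun hs hsv => hv _ (hsv ▸ hs)
  refine ⟨fun w => ?_, fun x y hxy => ?_⟩
  · obtain ⟨u, huS, hu⟩ := hS.1 w
    exact ⟨u, ⟨huS, not_in hu⟩, hu⟩
  · obtain ⟨s, hsS, hs⟩ := hS.2 x y hxy
    refine ⟨s, ⟨hsS, ?_⟩, hs⟩
    rcases hs with hs | hs
    exacts [not_in hs.1, not_in hs.1]

theorem oldNum_le_ncard {S : Set V} (hS : IsOLD D S) : oldNum D ≤ S.ncard :=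
  Nat.sInf_le ⟨S, hS, rfl⟩

end

theorem stmt_6 {V : Type*} [Fintype V] (D : V → V → Prop) (hloc : Locatable D)
    (h : ∃ v, (∀ u, ¬ D u v) ∨ (∀ u, ¬ D v u)) :
    oldNum D ≤ Fintype.card V - 1 := by
  obtain ⟨v, hsource | hsink⟩ := h
  · obtain ⟨u, hu⟩ := hloc.1 v
    exact absurd hu (hsource u)
  · have hOLD : IsOLD D ({v}ᶜ : Set V) := by
      simpa [Set.compl_eq_univ_sdiff] using
        (locatable_iff_isOLD_univ.1 hloc).diff_singleton_of_sink hsink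
    calc oldNum D ≤ ({v}ᶜ : Set V).ncard := oldNum_le_ncard hOLD
      _ = Fintype.card V - 1 := by
        rw [Set.ncard_compl, Set.ncard_singleton, Nat.card_eq_fintype_card]
end

section
/- Let D' be a digraph of order n−1 whose underlying graph is a tree with γ_OL(D') = n−1, and let b be a vertex of D' without a loop such that f⁻(b), the unique vertex with a forcing arc into b, is domination-forced in D' and has out-degree 1. Form D by adding a new vertex a with arcs ab and aa. Then γ_OL(D) = n and the underlying graph of D is a tree. -/
/-!
Since `γ_OL(D') = |V(D')|`, the whole vertex set is the only OLD set of `D'`: `D'` is locatable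
and every vertex is domination- or location-forced, for a vertex that is neither could be dropped
from the vertex set. The same characterisation is verified for `D`. The new vertex `a` is
dominated only by itself. If `N⁻(w) = {v}` in `D'`, then in `D` either still `N⁻(w) = {v}`, or
`w = b` and `N⁻(b) ∆ N⁻(a) = {v}`. A pair `x, y` with `N⁻(x) ∆ N⁻(y) = {v}` never contains `b`:
`N⁻(b) = {c}` with `c = f⁻(b)` domination-forced of out-degree one, so for `y ≠ b` the difference
`N⁻(b) ∆ N⁻(y)` contains `c` together with all of the nonempty `N⁻(y) ∌ c`. Hence the pair
still locates `v` in `D`. Finally the underlying graph of `D` is that of `D'` with a pendant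
vertex attached, a tree by counting edges.
-/

open scoped symmDiff

section OLD

variable {V : Type*} {D : V → V → Prop}

def Forced (D : V → V → Prop) (v : V) : Prop := DomForced D v ∨ LocForced D v

lemma IsOLD.mem_of_forced {S : Set V} (hS : IsOLD D S) {v : V} (hv : Forced D v) : v ∈ S := by
  rcases hv with ⟨w, hw⟩ | ⟨x, y, hxy, hd⟩
  · obtain ⟨u, huS, hu⟩ := hS.1 w
    have huv : u ∈ ({v} : Set V) := hw ▸ hu
    exact huv ▸ huS
  · obtain ⟨s, hsS, hs⟩ := hS.2 x y hxy
    have hsv : s ∈ ({v} : Set V) := hd ▸ hs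
    exact hsv ▸ hsS

lemma isOLD_univ_iff : IsOLD D Set.univ ↔ Locatable D := by
  simp only [IsOLD, Locatable, Set.mem_univ, true_and, Set.Nonempty]
  refine and_congr Iff.rfl ⟨fun h x y hxy => ?_, fun h x y hxy => ?_⟩
  · by_contra hne
    obtain ⟨s, hs⟩ := h x y hne
    exact Set.symmDiff_nonempty.mp ⟨s, hs⟩ hxy
  · exact Set.symmDiff_nonempty.mpr (mt (h x y) hxy)

lemma exists_mem_ne_of_ne_singleton {s : Set V} (hs : s.Nonempty) {v : V} (h : s ≠ {v}) :
    ∃ u ∈ s, u ≠ v := by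
  simpa using Set.not_subset.mp (mt hs.subset_singleton_iff.mp h)

lemma Locatable.isOLD_compl_singleton (hD : Locatable D) {v : V} (hv : ¬ Forced D v) :
    IsOLD D {v}ᶜ := by
  simp only [Forced, DomForced, LocForced, not_or, not_exists, not_and] at hv
  refine ⟨fun w => ?_, fun x y hxy => ?_⟩
  · exact exists_mem_ne_of_ne_singleton (hD.1 w) (hv.1 w) |>.imp fun u ⟨hu, huv⟩ => ⟨huv, hu⟩
  · exact exists_mem_ne_of_ne_singleton (Set.symmDiff_nonempty.mpr (mt (hD.2 x y) hxy))
      (hv.2 x y hxy) |>.imp fun u ⟨hu, huv⟩ => ⟨huv, hu⟩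

theorem oldNum_eq_card_iff_s19 [Fintype V] :
    oldNum D = Fintype.card V ↔ Locatable D ∧ ∀ v, Forced D v := by
  constructor
  · intro h
    cases isEmpty_or_nonempty V
    · exact ⟨⟨isEmptyElim, isEmptyElim⟩, isEmptyElim⟩
    have hpos : 0 < oldNum D := h ▸ Fintype.card_pos
    obtain ⟨S, hS, hSc⟩ := Nat.sInf_mem (Nat.nonempty_of_pos_sInf hpos)
    have hSuniv : S = Set.univ := Set.eq_of_subset_of_ncard_le (Set.subset_univ S)
      (by rw [Set.ncard_univ, Nat.card_eq_fintype_card, hSc, ← oldNum, h])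
    subst hSuniv
    have hD := isOLD_univ_iff.mp hS
    refine ⟨hD, fun v => by_contra fun hv => ?_⟩
    have hle : oldNum D ≤ ({v}ᶜ : Set V).ncard :=
      Nat.sInf_le ⟨_, hD.isOLD_compl_singleton hv, rfl⟩
    rw [Set.ncard_compl, Set.ncard_singleton, Nat.card_eq_fintype_card] at hle
    omega
  · rintro ⟨hD, hforced⟩
    have : {k | ∃ S : Set V, IsOLD D S ∧ S.ncard = k} = {Fintype.card V} := by
      ext k
      constructor
      · rintro ⟨S, hS, rfl⟩
        rw [Set.eq_univ_of_forall fun v => hS.mem_of_forced (hforced v), Set.ncard_univ,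
          Nat.card_eq_fintype_card, Set.mem_singleton_iff]
      · rintro rfl
        exact ⟨Set.univ, isOLD_univ_iff.mpr hD, by rw [Set.ncard_univ, Nat.card_eq_fintype_card]⟩
    rw [oldNum, this, csInf_singleton]

end OLD

namespace SimpleGraph

variable {V : Type*} {G : SimpleGraph V}

lemma Connected.map_some_sup_edge (hG : G.Connected) (b : V) :
    (G.map Function.Embedding.some ⊔ edge none (some b)).Connected := by
  have hb : ∀ x, (G.map Function.Embedding.some ⊔ edge none (some b)).Reachable x none := by
    have hnone : (G.map Function.Embedding.some ⊔ edge none (some b)).Adj none (some b) := by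
      simp [edge_adj]
    rintro (_ | v)
    · rfl
    · refine Reachable.trans ?_ hnone.reachable.symm
      exact ((hG.preconnected v b).map (Embedding.map _ G).toHom).mono le_sup_left
  exact (connected_iff _).mpr ⟨fun x y => (hb x).trans (hb y).symm, ⟨none⟩⟩

lemma IsTree.map_some_sup_edge [Finite V] (hG : G.IsTree) (b : V) :
    (G.map Function.Embedding.some ⊔ edge none (some b)).IsTree := by
  rw [isTree_iff_connected_and_card] at hG ⊢
  refine ⟨hG.1.map_some_sup_edge b, ?_⟩
  have hnadj : ¬ (G.map Function.Embedding.some).Adj none (some b) := by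
    rw [map_adj]; simp
  have hdisj := disjoint_edgeSet.mpr ((disjoint_edge _).mpr hnadj)
  rw [edgeSet_sup, Nat.card_coe_set_eq, Set.ncard_union_eq hdisj,
    edgeSet_edge_of_ne (Option.some_ne_none b).symm, Set.ncard_singleton, edgeSet_map,
    Set.ncard_image_of_injective _ Function.Embedding.some.sym2Map.injective,
    ← Nat.card_coe_set_eq, Finite.card_option, hG.2]

end SimpleGraph

section AddLoopedLeaf

variable {V : Type*} {D : V → V → Prop} {b : V}

/-- `none` is the paper's new vertex `a`. -/
def addLoopedLeaf (D : V → V → Prop) (b : V) : Option V → Option V → Prop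
  | some u, some v => D u v
  | none, some v => v = b
  | none, none => True
  | some _, none => False

lemma nin_addLoopedLeaf_none : Nin (addLoopedLeaf D b) none = {none} := by
  ext (_ | u) <;> simp [Nin, addLoopedLeaf]

lemma nin_addLoopedLeaf_some_of_ne {v : V} (hvb : v ≠ b) :
    Nin (addLoopedLeaf D b) (some v) = some '' Nin D v := by
  ext (_ | u) <;> simp [Nin, addLoopedLeaf, hvb]

lemma nin_addLoopedLeaf_some_self :
    Nin (addLoopedLeaf D b) (some b) = insert none (some '' Nin D b) := by
  ext (_ | u) <;> simp [Nin, addLoopedLeaf]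

lemma Locatable.addLoopedLeaf (hD : Locatable D) : Locatable (addLoopedLeaf D b) := by
  refine ⟨fun x => ?_, fun x y hxy => ?_⟩
  · cases x with
    | none => exact ⟨none, trivial⟩
    | some v => obtain ⟨u, hu⟩ := hD.1 v; exact ⟨some u, hu⟩
  · have hne (v : V) :
        Nin (_root_.addLoopedLeaf D b) (some v) ≠ Nin (_root_.addLoopedLeaf D b) none := by
      intro h
      obtain ⟨u, hu⟩ := hD.1 v
      have : some u ∈ Nin (_root_.addLoopedLeaf D b) none := h ▸ hu
      simp [nin_addLoopedLeaf_none] at this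
    rcases x with _ | x <;> rcases y with _ | y
    · rfl
    · exact absurd hxy.symm (hne y)
    · exact absurd hxy (hne x)
    · exact congrArg some (hD.2 x y (congrArg (some ⁻¹' ·) hxy))

lemma forced_addLoopedLeaf_none : Forced (addLoopedLeaf D b) none :=
  Or.inl ⟨none, nin_addLoopedLeaf_none⟩

lemma DomForced.addLoopedLeaf {v : V} (hv : DomForced D v) :
    Forced (addLoopedLeaf D b) (some v) := by
  obtain ⟨w, hw⟩ := hv
  by_cases hwb : w = b
  · subst hwb
    refine Or.inr ⟨some w, none, Option.some_ne_none w, ?_⟩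
    rw [nin_addLoopedLeaf_some_self, nin_addLoopedLeaf_none, hw]
    ext (_ | u) <;> simp [Set.mem_symmDiff]
  · exact Or.inl ⟨some w, by rw [nin_addLoopedLeaf_some_of_ne hwb, hw, Set.image_singleton]⟩

lemma nin_symmDiff_ne_singleton {c y v : V} (hb : Nin D b = {c}) (hc : ∀ u, D c u → u = b)
    (hy : (Nin D y).Nonempty) (hyb : y ≠ b) : Nin D b ∆ Nin D y ≠ {v} := by
  intro h
  have hcy : c ∉ Nin D y := fun hcy => hyb (hc y hcy)
  obtain ⟨s, hs⟩ := hy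
  have hsc : s ≠ c := by rintro rfl; exact hcy hs
  have hc_mem : c ∈ Nin D b ∆ Nin D y := Set.mem_symmDiff.mpr (Or.inl ⟨hb ▸ rfl, hcy⟩)
  have hs_mem : s ∈ Nin D b ∆ Nin D y := Set.mem_symmDiff.mpr (Or.inr ⟨hs, hb ▸ hsc⟩)
  rw [h] at hc_mem hs_mem
  exact hsc (hs_mem.trans hc_mem.symm)

lemma LocForced.addLoopedLeaf {c v : V} (hb : Nin D b = {c}) (hc : ∀ u, D c u → u = b)
    (hD : ∀ y, (Nin D y).Nonempty) (hv : LocForced D v) :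
    LocForced (addLoopedLeaf D b) (some v) := by
  obtain ⟨x, y, hxy, h⟩ := hv
  have hxb : x ≠ b := by
    rintro rfl
    exact nin_symmDiff_ne_singleton hb hc (hD y) hxy.symm h
  have hyb : y ≠ b := by
    rintro rfl
    exact nin_symmDiff_ne_singleton hb hc (hD x) hxy (symmDiff_comm (Nin D x) _ ▸ h)
  refine ⟨some x, some y, Option.some_injective V |>.ne hxy, ?_⟩
  rw [nin_addLoopedLeaf_some_of_ne hxb, nin_addLoopedLeaf_some_of_ne hyb,
    ← Set.image_symmDiff (Option.some_injective V), h, Set.image_singleton]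

lemma Forced.addLoopedLeaf {c v : V} (hb : Nin D b = {c}) (hc : ∀ u, D c u → u = b)
    (hD : ∀ y, (Nin D y).Nonempty) (hv : Forced D v) : Forced (addLoopedLeaf D b) (some v) :=
  hv.elim DomForced.addLoopedLeaf fun h => Or.inr (h.addLoopedLeaf hb hc hD)

lemma underlying_addLoopedLeaf : underlying (addLoopedLeaf D b) =
    (underlying D).map Function.Embedding.some ⊔ SimpleGraph.edge none (some b) := by
  ext (_ | u) (_ | v) <;>
    simp [underlying, addLoopedLeaf, SimpleGraph.edge_adj, SimpleGraph.map_adj']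

end AddLoopedLeaf

lemma ForcingArc.adj {V : Type*} {D : V → V → Prop} {x y : V} (h : ForcingArc D x y) : D x y :=
  h.elim (fun h => show x ∈ Nin D y from h ▸ rfl) fun ⟨_, _, h⟩ => h

lemma eq_addLoopedLeaf {V : Type*} {D' : V → V → Prop} {b : V} {D : Option V → Option V → Prop}
    (hD : ∀ x y, D x y ↔
      ((∃ u v, x = some u ∧ y = some v ∧ D' u v) ∨
        (x = none ∧ y = some b) ∨ (x = none ∧ y = none))) :
    D = addLoopedLeaf D' b := by
  funext x y
  rw [hD]
  rcases x with _ | u <;> rcases y with _ | v <;> simp [addLoopedLeaf]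

theorem stmt_19_general {V : Type*} [Fintype V] (D' : V → V → Prop) (b c : V)
    (htree : (underlying D').IsTree) (hext : oldNum D' = Fintype.card V)
    (hc : ForcingArc D' c b)
    (hcdom : DomForced D' c) (hcout : {u | D' c u}.ncard = 1)
    (D : Option V → Option V → Prop)
    (hD : ∀ x y, D x y ↔
      ((∃ u v, x = some u ∧ y = some v ∧ D' u v) ∨
        (x = none ∧ y = some b) ∨ (x = none ∧ y = none))) :
    oldNum D = Fintype.card (Option V) ∧ (underlying D).IsTree := by
  obtain rfl := eq_addLoopedLeaf hD
  obtain ⟨hloc, hforced⟩ := oldNum_eq_card_iff_s19.mp hext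
  have hc_out : ∀ u, D' c u → u = b := fun u hu =>
    ((Set.ncard_le_one_iff (Set.toFinite _)).mp hcout.le) hu hc.adj
  have hNb : Nin D' b = {c} := by
    obtain ⟨w, hw⟩ := hcdom
    rwa [← hc_out w (show c ∈ Nin D' w from hw ▸ rfl)]
  refine ⟨oldNum_eq_card_iff_s19.mpr ⟨hloc.addLoopedLeaf, ?_⟩, ?_⟩
  · rintro (_ | v)
    · exact forced_addLoopedLeaf_none
    · exact (hforced v).addLoopedLeaf hNb hc_out hloc.1
  · rw [underlying_addLoopedLeaf]
    exact htree.map_some_sup_edge b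

theorem stmt_19 {V : Type*} [Fintype V] (D' : V → V → Prop) (b c : V)
    (htree : (underlying D').IsTree) (hext : oldNum D' = Fintype.card V)
    (hbloop : ¬ D' b b)
    (hc : ForcingArc D' c b) (hcu : ∀ c', ForcingArc D' c' b → c' = c)
    (hcdom : DomForced D' c) (hcout : {u | D' c u}.ncard = 1)
    (D : Option V → Option V → Prop)
    (hD : ∀ x y, D x y ↔
      ((∃ u v, x = some u ∧ y = some v ∧ D' u v) ∨
        (x = none ∧ y = some b) ∨ (x = none ∧ y = none))) :
    oldNum D = Fintype.card (Option V) ∧ (underlying D).IsTree :=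
  stmt_19_general D' b c htree hext hc hcdom hcout D hD
end
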